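/- Let T be a bistrong graded monad on a monoidal category C and let u : A ⟶ A' and v : B ⟶ B' be morphisms of C with pure Kleisli 1-cells ũ and ṽ. Then both whiskered composites of ũ and ṽ regrade to the pure 1-cell of u ⊗ v: [underlying morphism of (ũ ⋉ B) ; (A' ⋊ ṽ)] ≫ (T.map ((λ_𝟙).hom)).app (A' ⊗ B') = (u ⊗ v) ≫ ε.app (A' ⊗ B'), and [underlying morphism of (A ⋊ ṽ) ; (ũ ⋉ B')] ≫ (T.map ((λ_𝟙).hom)).app (A' ⊗ B') = (u ⊗ v) ≫ ε.app (A' ⊗ B'). (Here λ_𝟙 = ρ_𝟙 : 𝟙 ⊗ 𝟙 ≅ 𝟙 in E; in particular the two interchange witnesses for pure 1-cells agree, as required by condition 3 of the definition of a Freyd bicategory.) -/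

import Mathlib

open CategoryTheory Category MonoidalCategory

universe v₁ v₂ u₁ u₂

/-- A graded monad on a category `C` with grades in a monoidal category `E`:
a lax monoidal functor `T : E ⥤ (C ⥤ C)` where `C ⥤ C` is monoidal under composition,
so that `μ e e' : T_e ∘ T_{e'} ⟶ T_{e ⊗ e'}` with `(T_e ∘ T_{e'}) X = T_e (T_{e'} X)`. -/
structure GradedMonad (E : Type u₁) [Category.{v₁} E] [MonoidalCategory E]
    (C : Type u₂) [Category.{v₂} C] where
  T : E ⥤ C ⥤ C
  ε : 𝟭 C ⟶ T.obj (𝟙_ E)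
  μ : ∀ e e' : E, (T.obj e' ⋙ T.obj e) ⟶ T.obj (e ⊗ e')
  μ_natural : ∀ {e d e' d' : E} (γ : e ⟶ d) (δ : e' ⟶ d') (X : C),
    (T.map γ).app ((T.obj e').obj X) ≫ (T.obj d).map ((T.map δ).app X) ≫ (μ d d').app X =
      (μ e e').app X ≫ (T.map (γ ⊗ₘ δ)).app X
  left_unit : ∀ (e : E) (X : C),
    ε.app ((T.obj e).obj X) ≫ (μ (𝟙_ E) e).app X = (T.map (λ_ e).inv).app X
  right_unit : ∀ (e : E) (X : C),
    (T.obj e).map (ε.app X) ≫ (μ e (𝟙_ E)).app X = (T.map (ρ_ e).inv).app X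
  assoc : ∀ (e e' e'' : E) (X : C),
    (μ e e').app ((T.obj e'').obj X) ≫ (μ (e ⊗ e') e'').app X ≫
        (T.map (α_ e e' e'').hom).app X =
      (T.obj e).map ((μ e' e'').app X) ≫ (μ e (e' ⊗ e'')).app X

/-- A bistrong graded monad on a monoidal category `C`: a graded monad equipped with a
left strength `t` and a right strength `s`, natural in both objects and in the grade,
compatible with the unit `ε` and multiplication `μ` of the graded monad. -/
structure BistrongGradedMonad (E : Type u₁) [Category.{v₁} E] [MonoidalCategory E]
    (C : Type u₂) [Category.{v₂} C] [MonoidalCategory C] extends GradedMonad E C where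
  t : ∀ (e : E) (A B : C), A ⊗ (T.obj e).obj B ⟶ (T.obj e).obj (A ⊗ B)
  s : ∀ (e : E) (A B : C), (T.obj e).obj A ⊗ B ⟶ (T.obj e).obj (A ⊗ B)
  t_natural_left : ∀ (e : E) {A A' : C} (u : A ⟶ A') (B : C),
    (u ▷ (T.obj e).obj B) ≫ t e A' B = t e A B ≫ (T.obj e).map (u ▷ B)
  t_natural_right : ∀ (e : E) (A : C) {B B' : C} (v : B ⟶ B'),
    (A ◁ (T.obj e).map v) ≫ t e A B' = t e A B ≫ (T.obj e).map (A ◁ v)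
  t_natural_grade : ∀ {e e' : E} (γ : e ⟶ e') (A B : C),
    (A ◁ (T.map γ).app B) ≫ t e' A B = t e A B ≫ (T.map γ).app (A ⊗ B)
  s_natural_left : ∀ (e : E) {A A' : C} (u : A ⟶ A') (B : C),
    ((T.obj e).map u ▷ B) ≫ s e A' B = s e A B ≫ (T.obj e).map (u ▷ B)
  s_natural_right : ∀ (e : E) (A : C) {B B' : C} (v : B ⟶ B'),
    ((T.obj e).obj A ◁ v) ≫ s e A B' = s e A B ≫ (T.obj e).map (A ◁ v)
  s_natural_grade : ∀ {e e' : E} (γ : e ⟶ e') (A B : C),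
    ((T.map γ).app A ▷ B) ≫ s e' A B = s e A B ≫ (T.map γ).app (A ⊗ B)
  t_unit : ∀ A B : C, (A ◁ ε.app B) ≫ t (𝟙_ E) A B = ε.app (A ⊗ B)
  s_unit : ∀ A B : C, (ε.app A ▷ B) ≫ s (𝟙_ E) A B = ε.app (A ⊗ B)
  t_mul : ∀ (e e' : E) (A B : C),
    (A ◁ (μ e e').app B) ≫ t (e ⊗ e') A B =
      t e A ((T.obj e').obj B) ≫ (T.obj e).map (t e' A B) ≫ (μ e e').app (A ⊗ B)
  s_mul : ∀ (e e' : E) (A B : C),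
    ((μ e e').app A ▷ B) ≫ s (e ⊗ e') A B =
      s e ((T.obj e').obj A) B ≫ (T.obj e).map (s e' A B) ≫ (μ e e').app (A ⊗ B)

/-!
Pure 1-cells are sent by the strengths to pure 1-cells (unit laws of `t` and `s`), so each
whiskered composite is a Kleisli composite whose first factor is pure. Naturality of `ε` moves
the unit past the second factor, and the left unit law of `μ` cancels it against the
regrading along `λ_𝟙`. What remains is `u ▷ B ≫ A' ◁ v` or `A ◁ v ≫ u ▷ B'`, both equal
to `u ⊗ v`.
-/

namespace GradedMonad

variable {E : Type u₁} [Category.{v₁} E] [MonoidalCategory E] {C : Type u₂} [Category.{v₂} C]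
  (M : GradedMonad E C)

theorem unit_app_mul_app_map_leftUnitor_hom (e : E) (X : C) :
    M.ε.app ((M.T.obj e).obj X) ≫ (M.μ (𝟙_ E) e).app X ≫ (M.T.map (λ_ e).hom).app X =
      𝟙 ((M.T.obj e).obj X) := by
  rw [← Category.assoc, M.left_unit, ← NatTrans.comp_app, ← M.T.map_comp, Iso.inv_hom_id,
    M.T.map_id, NatTrans.id_app]

theorem unit_app_kleisliComp {Y Z : C} {e : E} (g : Y ⟶ (M.T.obj e).obj Z) :
    M.ε.app Y ≫ (M.T.obj (𝟙_ E)).map g ≫ (M.μ (𝟙_ E) e).app Z ≫ (M.T.map (λ_ e).hom).app Z =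
      g := by
  have unit_naturality : M.ε.app Y ≫ (M.T.obj (𝟙_ E)).map g = g ≫ M.ε.app _ :=
    (M.ε.naturality g).symm
  rw [reassoc_of% unit_naturality, unit_app_mul_app_map_leftUnitor_hom, Category.comp_id]

end GradedMonad

namespace BistrongGradedMonad

variable {E : Type u₁} [Category.{v₁} E] [MonoidalCategory E] {C : Type u₂} [Category.{v₂} C]
  [MonoidalCategory C] (M : BistrongGradedMonad E C)

theorem pure_whiskerRight_comp_s {A A' : C} (u : A ⟶ A') (B : C) :
    ((u ≫ M.ε.app A') ▷ B) ≫ M.s (𝟙_ E) A' B = (u ▷ B) ≫ M.ε.app (A' ⊗ B) := by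
  rw [comp_whiskerRight, Category.assoc, M.s_unit]

theorem whiskerLeft_pure_comp_t (A : C) {B B' : C} (v : B ⟶ B') :
    (A ◁ (v ≫ M.ε.app B')) ≫ M.t (𝟙_ E) A B' = (A ◁ v) ≫ M.ε.app (A ⊗ B') := by
  rw [whiskerLeft_comp, Category.assoc, M.t_unit]

end BistrongGradedMonad

/-- For pure 1-cells `ũ` and `ṽ`, both whiskered composites regrade (along
`λ_𝟙 = ρ_𝟙 : 𝟙 ⊗ 𝟙 ≅ 𝟙`) to the pure 1-cell of `u ⊗ v`; in particular the two
interchange witnesses for pure 1-cells agree. -/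
theorem BistrongGradedMonad.pure_interchange {E : Type u₁} [Category.{v₁} E]
    [MonoidalCategory E] {C : Type u₂} [Category.{v₂} C] [MonoidalCategory C]
    (M : BistrongGradedMonad E C)
    {A A' B B' : C} (u : A ⟶ A') (v : B ⟶ B') :
    ((((u ≫ M.ε.app A') ▷ B) ≫ M.s (𝟙_ E) A' B) ≫
        (M.T.obj (𝟙_ E)).map ((A' ◁ (v ≫ M.ε.app B')) ≫ M.t (𝟙_ E) A' B') ≫
        (M.μ (𝟙_ E) (𝟙_ E)).app (A' ⊗ B')) ≫
          (M.T.map (λ_ (𝟙_ E)).hom).app (A' ⊗ B') =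
      (u ⊗ₘ v) ≫ M.ε.app (A' ⊗ B') ∧
    (((A ◁ (v ≫ M.ε.app B')) ≫ M.t (𝟙_ E) A B') ≫
        (M.T.obj (𝟙_ E)).map (((u ≫ M.ε.app A') ▷ B') ≫ M.s (𝟙_ E) A' B') ≫
        (M.μ (𝟙_ E) (𝟙_ E)).app (A' ⊗ B')) ≫
          (M.T.map (λ_ (𝟙_ E)).hom).app (A' ⊗ B') =
      (u ⊗ₘ v) ≫ M.ε.app (A' ⊗ B') := by
  rw [M.pure_whiskerRight_comp_s, M.whiskerLeft_pure_comp_t, M.whiskerLeft_pure_comp_t,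
    M.pure_whiskerRight_comp_s]
  simp only [Category.assoc]
  rw [M.unit_app_kleisliComp, M.unit_app_kleisliComp]
  exact ⟨by rw [MonoidalCategory.tensorHom_def, Category.assoc],
    by rw [tensorHom_def', Category.assoc]⟩
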